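/- Let M be a commutative idempotent monoid acting additively on an abelian group G, F : M → G a function satisfying the chain rule, and X_1, …, X_n, Y ∈ M. Then the following are equivalent: (1) X_1, …, X_n are mutually F-independent given Y; (2) Y.DTC_F(X_1; …; X_n) = 0; (3) (Y·X_{[n]∖I}).F(;_{i∈I} X_i) = 0 for all I ⊆ [n] with |I| ≥ 2; (4) Y.F(X_i; X_{[n]∖{i}}) = 0 for all i = 1, …, n. -/

import Mathlib

/-!
Summing `X_{s∖I}.F(;_{i∈I} X_i)` over all `I ⊆ s` gives `F(X_s)` by the chain rule (induct on `s`,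
adding its largest element), so `DTC_F` is the sum of these terms over `|I| ≥ 2`: this is (3) ⇒ (2).
Idempotence gives `DTC_F − X_i.DTC_F = F(X_i; X_{[n]∖{i}})`, whence (2) ⇒ (4). Under (4),
`(Y·X_t).F(X_i) = Y.F(X_i)` whenever `i ∉ t`, and the recursion `F(;I ∪ {a}) = F(;I) − X_a.F(;I)`
then makes `(Y·X_t).F(;I)` vanish for `|I| ≥ 2`: this is (3).
-/

namespace AMRF
/-- An additive monoid action of a commutative monoid `M` on an abelian group `G`. -/
structure MAction (M G : Type*) [CommMonoid M] [AddCommGroup G] where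
  act : M → G → G
  act_one : ∀ g, act 1 g = g
  act_mul : ∀ X Y g, act X (act Y g) = act (X * Y) g
  act_add : ∀ X g h, act X (g + h) = act X g + act X h

variable {M G : Type*} [CommMonoid M] [AddCommGroup G]

/-- `F : M → G` satisfies the chain rule `F(XY) = F(X) + X.F(Y)`. -/
def ChainRule (A : MAction M G) (F : M → G) : Prop :=
  ∀ X Y : M, F (X * Y) = F X + A.act X (F Y)

/-- Higher-order terms on a *reversed* argument list: the head of the list is the *last*
argument `Y_q` in `F_q(Y₁; …; Y_q)`. -/
def Fseq (A : MAction M G) (F : M → G) : List M → G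
  | [] => 0
  | [Y] => F Y
  | Y :: Z :: l => Fseq A F (Z :: l) - A.act Y (Fseq A F (Z :: l))

/-- `Fof A F [Y₁, …, Y_q] = F_q(Y₁; …; Y_q)`, defined inductively by
`F_q(Y₁; …; Y_q) = F_{q−1}(Y₁; …; Y_{q−1}) − Y_q.F_{q−1}(Y₁; …; Y_{q−1})`. -/
def Fof (A : MAction M G) (F : M → G) (l : List M) : G :=
  Fseq A F l.reverse

/-- The interaction term `F(;_{i∈I} X_i)`, with arguments in increasing index order. -/
def Fint (A : MAction M G) (F : M → G) {ι : Type*} [LinearOrder ι] (X : ι → M)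
    (I : Finset ι) : G :=
  Fof A F ((I.sort (· ≤ ·)).map X)

/-- The `F`-independence relation: `X ⊥_F Y | Z` iff `Z.F(X; Y) = 0`, where
`F(X; Y) = F(X) − Y.F(X)` is the second-order term. -/
def Findep (A : MAction M G) (F : M → G) (X Y Z : M) : Prop :=
  A.act Z (F X - A.act Y (F X)) = 0

/-- The `F`-dual total correlation `DTC_F(X₁; …; X_n) = F(X_{[n]}) − Σᵢ X_{[n]∖{i}}.F(Xᵢ)`. -/
def DTC (A : MAction M G) (F : M → G) {n : ℕ} (X : Fin n → M) : G :=
  F (∏ i, X i) - ∑ i, A.act (∏ j ∈ Finset.univ.erase i, X j) (F (X i))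

namespace MAction

def toAddMonoidHom (A : MAction M G) (Z : M) : G →+ G :=
  AddMonoidHom.mk' (A.act Z) (A.act_add Z)

variable (A : MAction M G) (Z : M)

lemma act_zero : A.act Z 0 = 0 := (A.toAddMonoidHom Z).map_zero

lemma act_sub (g h : G) : A.act Z (g - h) = A.act Z g - A.act Z h :=
  (A.toAddMonoidHom Z).map_sub g h

lemma act_sum {ι : Type*} (s : Finset ι) (f : ι → G) :
    A.act Z (∑ i ∈ s, f i) = ∑ i ∈ s, A.act Z (f i) :=
  map_sum (A.toAddMonoidHom Z) f s

lemma act_mul_eq_of_mul_eq {Y P Q : M} {g : G} (hP : A.act (Y * P) g = A.act Y g)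
    (hQ : Q * P = P) : A.act (Y * Q) g = A.act Y g :=
  calc A.act (Y * Q) g = A.act Q (A.act Y g) := by rw [A.act_mul, mul_comm]
    _ = A.act (Y * (Q * P)) g := by rw [← hP, A.act_mul, mul_left_comm]
    _ = A.act Y g := by rw [hQ, hP]

end MAction

open MAction

lemma prod_mul_prod_of_subset (hidem : ∀ x : M, x * x = x) {ι : Type*} [DecidableEq ι]
    (X : ι → M) {s t : Finset ι} (h : t ⊆ s) :
    (∏ a ∈ t, X a) * ∏ a ∈ s, X a = ∏ a ∈ s, X a := by
  rw [← Finset.prod_sdiff h, mul_left_comm, ← Finset.prod_mul_distrib]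
  simp only [hidem]

lemma _root_.Finset.sort_insert_of_forall_lt {ι : Type*} [LinearOrder ι] {I : Finset ι} {a : ι}
    (ha : ∀ x ∈ I, x < a) : (insert a I).sort (· ≤ ·) = I.sort (· ≤ ·) ++ [a] := by
  have haI : a ∉ I := fun h => lt_irrefl a (ha a h)
  have hset : (I.sort (· ≤ ·) ++ [a]).toFinset = insert a I := by
    ext x
    simp
  rw [← hset, List.toFinset_sort]
  · exact List.pairwise_append.mpr ⟨I.pairwise_sort _, List.pairwise_singleton _ _,
      fun x hx y hy => (List.mem_singleton.mp hy) ▸ (ha x ((I.mem_sort _).mp hx)).le⟩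
  · exact List.nodup_append.mpr ⟨I.sort_nodup _, List.nodup_singleton a,
      fun x hx y hy => by rintro rfl; exact haI ((I.mem_sort _).mp (List.mem_singleton.mp hy ▸ hx))⟩

section ChainRule

variable {A : MAction M G} {F : M → G}

lemma ChainRule.map_one (hF : ChainRule A F) : F 1 = 0 := by
  simpa [A.act_one] using hF 1 1

lemma ChainRule.act_self_of_mul_self (hF : ChainRule A F) {x : M} (hx : x * x = x) :
    A.act x (F x) = 0 := by
  simpa [hx] using hF x x

end ChainRule

section Fint

variable (A : MAction M G) (F : M → G) {ι : Type*} [LinearOrder ι] (X : ι → M)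

lemma Fof_append_singleton {l : List M} (hl : l ≠ []) (b : M) :
    Fof A F (l ++ [b]) = Fof A F l - A.act b (Fof A F l) := by
  obtain ⟨y, ys, hys⟩ := List.exists_cons_of_ne_nil (List.reverse_ne_nil_iff.mpr hl)
  simp only [Fof, List.reverse_append, List.reverse_singleton, List.singleton_append, hys]
  rfl

lemma Fint_empty : Fint A F X ∅ = 0 := by
  simp only [Fint, Finset.sort_empty]
  rfl

lemma Fint_singleton (i : ι) : Fint A F X {i} = F (X i) := by
  simp only [Fint, Finset.sort_singleton]
  rfl

lemma Fint_insert_of_forall_lt {I : Finset ι} (hI : I.Nonempty) {a : ι} (ha : ∀ x ∈ I, x < a) :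
    Fint A F X (insert a I) = Fint A F X I - A.act (X a) (Fint A F X I) := by
  rw [Fint, Finset.sort_insert_of_forall_lt ha, List.map_append, List.map_singleton]
  exact Fof_append_singleton A F (by simpa [← List.length_eq_zero_iff] using hI.ne_empty) (X a)

end Fint

section Decomposition

variable {A : MAction M G} {F : M → G}

theorem sum_powerset_act_Fint (hF : ChainRule A F) {ι : Type*} [LinearOrder ι] (X : ι → M)
    (s : Finset ι) :
    ∑ I ∈ s.powerset, A.act (∏ a ∈ s \ I, X a) (Fint A F X I) = F (∏ a ∈ s, X a) := by
  induction s using Finset.induction_on_max with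
  | empty => simp [Fint_empty, act_zero, hF.map_one]
  | insert k s hk ih =>
    have hks : k ∉ s := fun h => lt_irrefl k (hk k h)
    have split : ∀ J ∈ s.powerset,
        A.act (∏ a ∈ insert k s \ insert k J, X a) (Fint A F X (insert k J)) =
          A.act (∏ a ∈ s \ J, X a) (Fint A F X J)
            - A.act (X k * ∏ a ∈ s \ J, X a) (Fint A F X J)
            + if J = ∅ then A.act (∏ a ∈ s, X a) (F (X k)) else 0 := by
      intro J hJ
      rw [Finset.insert_sdiff_insert, Finset.sdiff_insert_of_notMem hks]
      rcases J.eq_empty_or_nonempty with rfl | hJne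
      · simp [Fint_empty, Fint_singleton, act_zero]
      · rw [Fint_insert_of_forall_lt A F X hJne fun x hx => hk x (Finset.mem_powerset.mp hJ hx),
          act_sub, A.act_mul, mul_comm, if_neg hJne.ne_empty, add_zero]
    have unsplit : ∀ I ∈ s.powerset,
        A.act (∏ a ∈ insert k s \ I, X a) (Fint A F X I) =
          A.act (X k * ∏ a ∈ s \ I, X a) (Fint A F X I) := by
      intro I hI
      have hkI : k ∉ I := fun h => hks (Finset.mem_powerset.mp hI h)
      rw [Finset.insert_sdiff_of_notMem _ hkI,
        Finset.prod_insert fun h => hks (Finset.mem_sdiff.mp h).1]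
    rw [Finset.sum_powerset_insert hks, Finset.sum_congr rfl split, Finset.sum_congr rfl unsplit,
      Finset.sum_add_distrib, Finset.sum_sub_distrib, ih, Finset.sum_ite_eq',
      if_pos (Finset.empty_mem_powerset s), Finset.prod_insert hks, mul_comm, hF]
    abel

theorem DTC_eq_sum_Fint (hF : ChainRule A F) {n : ℕ} (X : Fin n → M) :
    DTC A F X = ∑ I ∈ Finset.univ.powerset with 2 ≤ I.card,
      A.act (∏ a ∈ Finset.univ \ I, X a) (Fint A F X I) := by
  have small : ∑ I ∈ Finset.univ.powerset with ¬ 2 ≤ I.card,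
      A.act (∏ a ∈ Finset.univ \ I, X a) (Fint A F X I) =
        ∑ i, A.act (∏ j ∈ Finset.univ.erase i, X j) (F (X i)) := by
    rw [← Finset.sum_subset (s₁ := Finset.univ.map ⟨singleton, Finset.singleton_injective⟩)]
    · simp [Fint_singleton, Finset.sdiff_singleton_eq_erase]
    · intro I hI
      obtain ⟨i, -, rfl⟩ := Finset.mem_map.mp hI
      simp
    · intro I hI hIs
      have : I.card ≠ 1 := fun h =>
        hIs (Finset.mem_map.mpr (by obtain ⟨i, rfl⟩ := Finset.card_eq_one.mp h; simp))
      obtain rfl : I = ∅ := by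
        simpa using (show I.card = 0 by simp at hI; omega)
      rw [Fint_empty, act_zero]
  rw [DTC, ← sum_powerset_act_Fint hF X Finset.univ,
    ← Finset.sum_filter_add_sum_filter_not _ (fun I => 2 ≤ I.card), small, add_sub_cancel_right]

end Decomposition

section Independence

variable {A : MAction M G} {F : M → G}

lemma DTC_sub_act_DTC (hidem : ∀ x : M, x * x = x) (hF : ChainRule A F) {n : ℕ}
    (X : Fin n → M) (i : Fin n) :
    DTC A F X - A.act (X i) (DTC A F X) =
      F (X i) - A.act (∏ j ∈ Finset.univ.erase i, X j) (F (X i)) := by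
  have whole : F (∏ j, X j) - A.act (X i) (F (∏ j, X j)) = F (X i) := by
    rw [← Finset.mul_prod_erase Finset.univ X (Finset.mem_univ i), hF, A.act_add,
      hF.act_self_of_mul_self (hidem _), A.act_mul, hidem]
    abel
  have term : ∀ j, A.act (∏ k ∈ Finset.univ.erase j, X k) (F (X j))
      - A.act (X i) (A.act (∏ k ∈ Finset.univ.erase j, X k) (F (X j))) =
        if j = i then A.act (∏ k ∈ Finset.univ.erase i, X k) (F (X i)) else 0 := by
    intro j
    split_ifs with hji
    · rw [hji, A.act_mul, mul_comm, ← A.act_mul, hF.act_self_of_mul_self (hidem _), act_zero,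
        sub_zero]
    · rw [A.act_mul, ← Finset.mul_prod_erase _ X (Finset.mem_erase.mpr ⟨Ne.symm hji,
        Finset.mem_univ i⟩), ← mul_assoc, hidem, sub_self]
  rw [DTC, act_sub, act_sum, sub_sub_sub_comm, whole, ← Finset.sum_sub_distrib,
    Finset.sum_congr rfl fun j _ => term j, Finset.sum_ite_eq', if_pos (Finset.mem_univ i)]

lemma act_mul_prod_eq_of_act_sub_eq_zero (hidem : ∀ x : M, x * x = x) {ι : Type*} [Fintype ι]
    [DecidableEq ι] (X : ι → M) {Y : M} {i : ι}
    (h : A.act Y (F (X i) - A.act (∏ j ∈ Finset.univ.erase i, X j) (F (X i))) = 0)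
    {t : Finset ι} (hit : i ∉ t) :
    A.act (Y * ∏ a ∈ t, X a) (F (X i)) = A.act Y (F (X i)) := by
  rw [act_sub, sub_eq_zero, A.act_mul] at h
  exact act_mul_eq_of_mul_eq A h.symm (prod_mul_prod_of_subset hidem X fun a ha =>
    Finset.mem_erase.mpr ⟨fun hai => hit (hai ▸ ha), Finset.mem_univ a⟩)

lemma act_mul_prod_Fint_eq_zero {ι : Type*} [LinearOrder ι] (X : ι → M) {Y : M}
    (habs : ∀ i (t : Finset ι), i ∉ t → A.act (Y * ∏ a ∈ t, X a) (F (X i)) = A.act Y (F (X i)))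
    (I : Finset ι) (hI : 2 ≤ I.card) (t : Finset ι) (ht : Disjoint t I) :
    A.act (Y * ∏ a ∈ t, X a) (Fint A F X I) = 0 := by
  induction I using Finset.induction_on_max generalizing t with
  | empty => simp at hI
  | insert a I ha ih =>
    have haI : a ∉ I := fun h => lt_irrefl a (ha a h)
    have hat : a ∉ t := Finset.disjoint_right.mp ht (Finset.mem_insert_self a I)
    have htI : Disjoint t I := Finset.disjoint_of_subset_right (Finset.subset_insert a I) ht
    rw [Finset.card_insert_of_notMem haI] at hI
    rw [Fint_insert_of_forall_lt A F X (Finset.card_pos.mp (by omega)) ha, act_sub, A.act_mul,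
      mul_assoc, mul_comm (∏ a ∈ t, X a), ← Finset.prod_insert hat]
    obtain hI1 | hI2 : I.card = 1 ∨ 2 ≤ I.card := by omega
    · obtain ⟨i, rfl⟩ := Finset.card_eq_one.mp hI1
      have hit : i ∉ t := Finset.disjoint_right.mp htI (Finset.mem_singleton_self i)
      have hia : i ≠ a := (ha i (Finset.mem_singleton_self i)).ne
      rw [Fint_singleton, habs i t hit, habs i _ (by simp [hia, hit]), sub_self]
    · rw [ih hI2 t htI, ih hI2 _ (Finset.disjoint_insert_left.mpr ⟨haI, htI⟩), sub_self]

end Independence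

/-- For `X₁, …, X_n, Y ∈ M` the following are equivalent:
(1) `X₁, …, X_n` are mutually `F`-independent given `Y`;
(2) `Y.DTC_F(X₁; …; X_n) = 0`;
(3) `(Y·X_{[n]∖I}).F(;_{i∈I} Xᵢ) = 0` for all `I ⊆ [n]` with `|I| ≥ 2`;
(4) `Y.F(Xᵢ; X_{[n]∖{i}}) = 0` for all `i`. -/
theorem mutual_F_independence_iff_DTC
    {M G : Type*} [CommMonoid M] [AddCommGroup G]
    (hidem : ∀ x : M, x * x = x)
    (A : MAction M G) (F : M → G) (hF : ChainRule A F)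
    (n : ℕ) (X : Fin n → M) (Y : M) :
    List.TFAE
      [ ∀ i : Fin n, Findep A F (X i) (∏ j ∈ Finset.univ.erase i, X j) Y,
        A.act Y (DTC A F X) = 0,
        ∀ I : Finset (Fin n), 2 ≤ I.card →
          A.act (Y * ∏ a ∈ Finset.univ \ I, X a) (Fint A F X I) = 0,
        ∀ i : Fin n,
          A.act Y (F (X i) - A.act (∏ j ∈ Finset.univ.erase i, X j) (F (X i))) = 0 ] := by
  tfae_have 1 ↔ 4 := Iff.rfl
  tfae_have 4 → 3 := fun h4 I hI =>
    act_mul_prod_Fint_eq_zero X (fun i _ hit => act_mul_prod_eq_of_act_sub_eq_zero hidem X (h4 i) hit)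
      I hI _ Finset.sdiff_disjoint
  tfae_have 3 → 2 := fun h3 => by
    rw [DTC_eq_sum_Fint hF, act_sum]
    exact Finset.sum_eq_zero fun I hI => by
      rw [A.act_mul]
      exact h3 I (Finset.mem_filter.mp hI).2
  tfae_have 2 → 4 := fun h2 i => by
    rw [← DTC_sub_act_DTC hidem hF, act_sub, A.act_mul, mul_comm, ← A.act_mul, h2, act_zero,
      sub_zero]
  tfae_finish

end AMRF
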